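/- arXiv:math/0605444 — 7 statements merged into one kernel-verified Lean document; each statement's English description precedes it below -/
import Mathlib

section
/- Let g be a positive integer, ε > 0 a real number, and N > 0. Let P and Q be fixed positive integers which are relatively prime, and let S ⊆ ℕ × ℕ be a set of pairs (m, k) such that for each k, the set {m ∈ ℕ : (m,k) ∈ S} has at most 3g elements. Then there exists a pair (m, k) ∉ S such that the number q = P·m + Q·k − g + 1 is a prime number with q > N and such that m < q^ε. -/
/-!
Suppose all admissible pairs lay in `S`, and replace `ε` by `a = min ε 1`. For a large `L`
and a prime `q ∈ (L, L²]`, since `P` is invertible modulo `Q` the line `P m + Q k = q + g - 1`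
carries a point with `m / Q = j` for each `j < T ≈ L^a / (P Q)`; these points have
`m < Q T ≤ q^ε`, so they lie in `S`, and `k ≤ (L² + g) / Q`. The fibres of `S` allow at most
`3 g ((L² + g) / Q + 1) = O(L²)` such points, whereas Chebyshev's bound `π(x) ≫ x / log x`
provides `(π(L²) - L - 1) T ≫ L^(2 - a/2) L^a` of them.
-/

open Filter Finset Real Asymptotics

section Counting

variable {P Q : ℕ}

lemma exists_mul_add_mul_eq_of_div_eq (hPQ : P.Coprime Q) (hQ : 0 < Q) {n j : ℕ}
    (h : P * (Q * (j + 1)) ≤ n) : ∃ m k, P * m + Q * k = n ∧ m / Q = j := by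
  have : NeZero Q := ⟨hQ.ne'⟩
  set r := ((P : ZMod Q)⁻¹ * n).val
  have hr : r < Q := ZMod.val_lt _
  have hle : P * (r + Q * j) ≤ n := (Nat.mul_le_mul_left P (by linarith)).trans h
  have hmod : P * (r + Q * j) ≡ n [MOD Q] := by
    rw [← ZMod.natCast_eq_natCast_iff]
    push_cast
    rw [ZMod.natCast_self, zero_mul, add_zero, ZMod.natCast_val, ZMod.cast_id', id,
      ← mul_assoc, ZMod.mul_inv_of_unit _ ((ZMod.isUnit_iff_coprime P Q).mpr hPQ), one_mul]
  obtain ⟨k, hk⟩ := (Nat.modEq_iff_dvd' hle).mp hmod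
  refine ⟨r + Q * j, k, by omega, ?_⟩
  rw [Nat.add_mul_div_left _ _ hQ, Nat.div_eq_of_lt hr, zero_add]

variable {S : Set (ℕ × ℕ)} {B : ℕ}

lemma card_le_mul_of_ncard_fiber_le
    (hS : ∀ k, {m | (m, k) ∈ S}.Finite ∧ {m | (m, k) ∈ S}.ncard ≤ B) {C : Finset (ℕ × ℕ)}
    {K : ℕ} (hC : ∀ z ∈ C, z ∈ S ∧ z.2 ≤ K) : #C ≤ (K + 1) * B := by
  calc #C = ∑ k ∈ range (K + 1), #{z ∈ C | z.2 = k} :=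
        card_eq_sum_card_fiberwise fun z hz => mem_range.mpr (Nat.lt_succ_of_le (hC z hz).2)
    _ ≤ ∑ _k ∈ range (K + 1), B := by
        refine sum_le_sum fun k _ => ?_
        rw [← Set.ncard_coe_finset]
        refine (Set.ncard_le_ncard_of_injOn Prod.fst ?_ ?_ (hS k).1).trans (hS k).2
        · intro z hz
          simp only [coe_filter, Set.mem_ofPred_eq] at hz
          simpa [← hz.2] using (hC z hz.1).1
        · intro z hz w hw h
          simp only [coe_filter, Set.mem_ofPred_eq] at hz hw
          exact Prod.ext h (hz.2.trans hw.2.symm)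
    _ = (K + 1) * B := by rw [sum_const, card_range, smul_eq_mul]

lemma card_mul_le_of_ncard_fiber_le (hPQ : P.Coprime Q) (hQ : 0 < Q)
    (hS : ∀ k, {m | (m, k) ∈ S}.Finite ∧ {m | (m, k) ∈ S}.ncard ≤ B)
    {Y : Finset ℕ} {T M : ℕ} (hY : ∀ n ∈ Y, P * (Q * T) ≤ n ∧ n ≤ M)
    (hYS : ∀ m k, P * m + Q * k ∈ Y → m < Q * T → (m, k) ∈ S) :
    #Y * T ≤ (M / Q + 1) * B := by
  set C := {z ∈ range (Q * T) ×ˢ range (M + 1) | P * z.1 + Q * z.2 ∈ Y}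
  have hsurj : Set.SurjOn (fun z : ℕ × ℕ => (P * z.1 + Q * z.2, z.1 / Q)) (C : Set (ℕ × ℕ))
      (Y ×ˢ range T : Finset (ℕ × ℕ)) := by
    rintro ⟨n, j⟩ hnj
    simp only [mem_coe, mem_product, mem_range] at hnj
    obtain ⟨m, k, hmk, rfl⟩ := exists_mul_add_mul_eq_of_div_eq hPQ hQ
      ((Nat.mul_le_mul_left _ (Nat.mul_le_mul_left _ hnj.2)).trans (hY n hnj.1).1)
    refine ⟨(m, k), ?_, by simp [hmk]⟩
    have := (hY n hnj.1).2
    simp only [C, coe_filter, mem_product, mem_range, Set.mem_ofPred_eq, hmk]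
    refine ⟨⟨?_, by nlinarith⟩, hnj.1⟩
    rw [mul_comm]
    exact (Nat.div_lt_iff_lt_mul hQ).mp hnj.2
  calc #Y * T = #(Y ×ˢ range T) := by rw [card_product, card_range]
    _ ≤ #C := card_le_card_of_surjOn _ hsurj
    _ ≤ (M / Q + 1) * B := by
        refine card_le_mul_of_ncard_fiber_le hS fun z hz => ?_
        simp only [C, mem_filter, mem_product, mem_range] at hz
        refine ⟨hYS z.1 z.2 hz.2 hz.1.1, ?_⟩
        rw [Nat.le_div_iff_mul_le hQ]
        have := (hY _ hz.2).2
        nlinarith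

lemma card_filter_prime_Ioc_mul_le (hPQ : P.Coprime Q) (hQ : 0 < Q)
    (hS : ∀ k, {m | (m, k) ∈ S}.Finite ∧ {m | (m, k) ∈ S}.ncard ≤ B) {g L T : ℕ}
    (hT : P * (Q * T) ≤ L)
    (hLS : ∀ m k q, q + g = P * m + Q * k + 1 → q.Prime → L < q → m < Q * T → (m, k) ∈ S) :
    #{q ∈ Ioc L (L ^ 2) | q.Prime} * T ≤ (g + 2) * B * L ^ 2 := by
  set X := {q ∈ Ioc L (L ^ 2) | q.Prime}
  rcases Nat.eq_zero_or_pos L with rfl | hL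
  · simp [X]
  have hX : #(X.image (· + g - 1)) = #X := card_image_of_injOn fun q hq r hr h => by
    simp only [X, coe_filter, mem_Ioc, Set.mem_ofPred_eq] at hq hr
    omega
  have hcount := card_mul_le_of_ncard_fiber_le hPQ hQ hS (Y := X.image (· + g - 1)) (T := T)
    (M := L ^ 2 + g) (fun n hn => ?_) (fun m k hmk hm => ?_)
  · have : (L ^ 2 + g) / Q ≤ L ^ 2 + g := Nat.div_le_self _ _
    have : 1 ≤ L ^ 2 := Nat.one_le_pow _ _ hL
    have hM : (L ^ 2 + g) / Q + 1 ≤ (g + 2) * L ^ 2 := by nlinarith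
    rw [hX] at hcount
    calc #X * T ≤ ((L ^ 2 + g) / Q + 1) * B := hcount
      _ ≤ (g + 2) * L ^ 2 * B := Nat.mul_le_mul_right B hM
      _ = (g + 2) * B * L ^ 2 := by ring
  · obtain ⟨q, hq, rfl⟩ := mem_image.mp hn
    simp only [X, mem_filter, mem_Ioc] at hq
    omega
  · obtain ⟨q, hq, hqmk⟩ := mem_image.mp hmk
    simp only [X, mem_filter, mem_Ioc] at hq
    exact hLS m k q (by omega) hq.2 hq.1.1 hm

end Counting

section Chebyshev

lemma isLittleO_rpow_mul_log_add_log_add_one {δ : ℝ} (hδ : 0 < δ) :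
    (fun x => x ^ (1 - δ) * log x + log (x + 1)) =o[atTop] id := by
  have hmain : (fun x => x ^ (1 - δ) * log x) =o[atTop] id := by
    refine ((isBigO_refl (fun x : ℝ => x ^ (1 - δ)) atTop).mul_isLittleO
      (isLittleO_log_rpow_atTop hδ)).congr' EventuallyEq.rfl ?_
    filter_upwards [eventually_gt_atTop 0] with x hx
    rw [← rpow_add hx, sub_add_cancel, rpow_one, id]
  have hshift : (fun x => log (x + 1)) =o[atTop] id :=
    (isLittleO_log_id_atTop.comp_tendsto
      (tendsto_atTop_add_const_right _ 1 tendsto_id)).trans_isBigO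
        ((isBigO_refl id atTop).add (isLittleO_const_id_atTop (1 : ℝ)).isBigO)
  exact hmain.add hshift

lemma eventually_rpow_le_primeCounting {δ : ℝ} (hδ : 0 < δ) :
    ∀ᶠ n : ℕ in atTop, (n : ℝ) ^ (1 - δ) ≤ Nat.primeCounting n := by
  have hbound := (isLittleO_rpow_mul_log_add_log_add_one hδ).bound (log_pos one_lt_two)
  filter_upwards [tendsto_natCast_atTop_atTop.eventually hbound, eventually_ge_atTop 2]
    with n hn hn2
  have hlog : 0 < log n := log_pos (by exact_mod_cast hn2)
  refine le_trans ?_ (Chebyshev.pi_ge n)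
  rw [le_div_iff₀ hlog]
  have := (le_abs_self _).trans hn
  rw [id, Real.norm_natCast] at this
  linarith

lemma eventually_mul_sq_lt_primeCounting_sq_mul_floor {a D : ℝ} (ha : 0 < a) (ha2 : a < 2)
    (hD : 0 < D) (C : ℝ) :
    ∀ᶠ L : ℕ in atTop,
      C * L ^ 2 < ((Nat.primeCounting (L ^ 2) : ℝ) - L - 1) * ⌊(L : ℝ) ^ a / D⌋₊ := by
  have hreal : ∀ᶠ x : ℝ in atTop,
      1 ≤ x ∧ 4 ≤ x ^ (1 - a / 2) ∧ 2 * D ≤ x ^ a ∧ 4 * C * D < x ^ (a / 2) :=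
    (eventually_ge_atTop 1).and <|
      ((tendsto_rpow_atTop (by linarith)).eventually_ge_atTop 4).and <|
      ((tendsto_rpow_atTop ha).eventually_ge_atTop _).and <|
      (tendsto_rpow_atTop (by linarith)).eventually_gt_atTop _
  filter_upwards [(tendsto_pow_atTop two_ne_zero).eventually
      (eventually_rpow_le_primeCounting (δ := a / 4) (by linarith)),
    tendsto_natCast_atTop_atTop.eventually hreal] with L hπ ⟨hL1, hu, hv2, hv⟩
  set x : ℝ := (L : ℝ)
  set u := x ^ (1 - a / 2)
  set v := x ^ (a / 2)
  have hx0 : 0 < x := by linarith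
  have huv : u * v = x := by rw [← rpow_add hx0]; norm_num
  have hvv : x ^ a = v * v := by rw [← rpow_add hx0]; norm_num
  have hπ' : u * x ≤ Nat.primeCounting (L ^ 2) := by
    convert hπ using 1
    rw [Nat.cast_pow, ← rpow_natCast, ← rpow_mul hx0.le, ← rpow_add_one hx0.ne']
    norm_num
    ring_nf
  have hT : x ^ a / (2 * D) ≤ ⌊x ^ a / D⌋₊ := by
    have := Nat.lt_floor_add_one (x ^ a / D)
    rw [div_le_iff₀ (by positivity)]
    rw [div_lt_iff₀ hD] at this
    nlinarith
  calc C * x ^ 2 < x ^ 2 * v / (4 * D) := by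
        rw [lt_div_iff₀ (by positivity)]
        nlinarith [pow_pos hx0 2]
    _ = u * x / 2 * (x ^ a / (2 * D)) := by
        rw [hvv, ← huv]
        field_simp
        ring
    _ ≤ ((Nat.primeCounting (L ^ 2) : ℝ) - x - 1) * ⌊x ^ a / D⌋₊ :=
        mul_le_mul (by nlinarith) hT (by positivity) (by nlinarith)

lemma primeCounting_le_card_filter_Ioc_add (a b : ℕ) :
    Nat.primeCounting b ≤ #{q ∈ Ioc a b | q.Prime} + (a + 1) := by
  rw [← Nat.primesLE_card_eq_primeCounting, ← card_range (a + 1)]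
  refine (card_le_card fun q hq => ?_).trans (card_union_le _ _)
  rw [Nat.mem_primesLE] at hq
  rw [mem_union, mem_filter, mem_Ioc, mem_range]
  by_cases hqa : a < q
  · exact Or.inl ⟨⟨hqa, hq.1⟩, hq.2⟩
  · exact Or.inr (by omega)

lemma eventually_mul_sq_lt_card_filter_prime_Ioc_mul_floor {a D : ℝ} (ha : 0 < a)
    (ha2 : a < 2) (hD : 0 < D) (C : ℕ) :
    ∀ᶠ L : ℕ in atTop, C * L ^ 2 < #{q ∈ Ioc L (L ^ 2) | q.Prime} * ⌊(L : ℝ) ^ a / D⌋₊ := by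
  filter_upwards [eventually_mul_sq_lt_primeCounting_sq_mul_floor ha ha2 hD C] with L hL
  have hπ : (Nat.primeCounting (L ^ 2) : ℝ) ≤ #{q ∈ Ioc L (L ^ 2) | q.Prime} + (L + 1) := by
    exact_mod_cast primeCounting_le_card_filter_Ioc_add L (L ^ 2)
  have := mul_le_mul_of_nonneg_right (by linarith : (Nat.primeCounting (L ^ 2) : ℝ) - L - 1 ≤
    #{q ∈ Ioc L (L ^ 2) | q.Prime}) (Nat.cast_nonneg ⌊(L : ℝ) ^ a / D⌋₊)
  exact_mod_cast hL.trans_le this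

end Chebyshev

theorem stmt3_general (g : ℕ) (ε : ℝ) (hε : 0 < ε) (N : ℕ)
    (P Q : ℕ) (hP : 0 < P) (hQ : 0 < Q) (hPQ : Nat.Coprime P Q)
    (S : Set (ℕ × ℕ))
    (hS : ∀ k : ℕ, {m : ℕ | (m, k) ∈ S}.Finite ∧ {m : ℕ | (m, k) ∈ S}.ncard ≤ 3 * g) :
    ∃ m k q : ℕ, (m, k) ∉ S ∧ q + g = P * m + Q * k + 1 ∧
      q.Prime ∧ N < q ∧ (m : ℝ) < (q : ℝ) ^ ε := by
  by_contra! hcon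
  set a := min ε 1
  have ha : 0 < a := lt_min hε one_pos
  have hD : (0 : ℝ) < P * Q := by positivity
  obtain ⟨L, hL, hNL⟩ := ((eventually_mul_sq_lt_card_filter_prime_Ioc_mul_floor ha
    (by linarith [min_le_right ε 1]) hD ((g + 2) * (3 * g))).and (eventually_gt_atTop N)).exists
  set T := ⌊(L : ℝ) ^ a / (P * Q)⌋₊
  have hL1 : (1 : ℝ) ≤ L := by exact_mod_cast (by omega : 1 ≤ L)
  have hPQT : (P * (Q * T) : ℝ) ≤ L ^ a := by
    have := Nat.floor_le (by positivity : 0 ≤ (L : ℝ) ^ a / (P * Q))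
    rw [le_div_iff₀ hD] at this
    linarith
  refine hL.not_ge (card_filter_prime_Ioc_mul_le hPQ hQ hS
    (by exact_mod_cast hPQT.trans (rpow_le_self_of_one_le hL1 (min_le_right _ _)))
    fun m k q hqmk hq hLq hm => ?_)
  by_contra hmkS
  have hLq' : (L : ℝ) ≤ q := by exact_mod_cast hLq.le
  refine (hcon m k q hmkS hqmk hq (by omega)).not_gt ?_
  calc (m : ℝ) < Q * T := by exact_mod_cast hm
    _ ≤ P * (Q * T) := le_mul_of_one_le_left (by positivity) (by exact_mod_cast hP)
    _ ≤ L ^ a := hPQT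
    _ ≤ q ^ a := rpow_le_rpow (by positivity) hLq' ha.le
    _ ≤ q ^ ε := rpow_le_rpow_of_exponent_le (hL1.trans hLq') (min_le_left _ _)

theorem stmt3 (g : ℕ) (hg : 0 < g) (ε : ℝ) (hε : 0 < ε) (N : ℕ) (hN : 0 < N)
    (P Q : ℕ) (hP : 0 < P) (hQ : 0 < Q) (hPQ : Nat.Coprime P Q)
    (S : Set (ℕ × ℕ))
    (hS : ∀ k : ℕ, {m : ℕ | (m, k) ∈ S}.Finite ∧ {m : ℕ | (m, k) ∈ S}.ncard ≤ 3 * g) :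
    ∃ m k q : ℕ, (m, k) ∉ S ∧ q + g = P * m + Q * k + 1 ∧
      q.Prime ∧ N < q ∧ (m : ℝ) < (q : ℝ) ^ ε :=
  stmt3_general g ε hε N P Q hP hQ hPQ S hS
end

section
/- Let E be an infinite field, E^sep a separable closure of E, and F ⊆ E^sep a finite extension of E. Let σ₁, …, σ_k : F → E^sep be a finite sequence of mutually distinct E-embeddings (E-algebra homomorphisms) of F into E^sep. Then the set {(σ₁(x), …, σ_k(x)) : x ∈ F} is Zariski-dense in affine k-space over E^sep; that is, every polynomial f in k variables with coefficients in E^sep that vanishes at (σ₁(x), …, σ_k(x)) for every x ∈ F is the zero polynomial. -/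
/-!
Fix an `E`-basis `b₁, …, bₙ` of `F` and let `M` be the `k × n` matrix `M i j = σᵢ(bⱼ)`. For
`x = ∑ cⱼ bⱼ` we have `(σᵢ x)ᵢ = M c`, so `f ∘ M` is a polynomial in `n` variables vanishing on
`Eⁿ`, hence zero because `E` is infinite. By Dedekind's independence of characters the rows of
`M` are linearly independent, so `c ↦ M c` is onto `(E^sep)ᵏ` and `f` vanishes identically.
-/

open MvPolynomial Matrix

theorem MvPolynomial.eq_zero_of_eval_algebraMap_eq_zero {K L ι : Type*} [Field K] [Infinite K]
    [CommRing L] [IsDomain L] [Algebra K L] {p : MvPolynomial ι L}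
    (h : ∀ c : ι → K, eval (algebraMap K L ∘ c) p = 0) : p = 0 := by
  refine funext_set (fun _ ↦ Set.range (algebraMap K L))
    (fun _ ↦ Set.infinite_range_of_injective (algebraMap K L).injective) fun x hx ↦ ?_
  choose c hc using fun i ↦ hx i trivial
  rw [map_zero, ← h c]
  congr
  exact (_root_.funext hc).symm

theorem MvPolynomial.exists_eval_eq_eval_mulVec {R m n : Type*} [CommRing R] [Fintype n]
    (M : Matrix m n R) (p : MvPolynomial m R) :
    ∃ q : MvPolynomial n R, ∀ c, eval c q = eval (M *ᵥ c) p :=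
  ⟨bind₁ (fun i ↦ ∑ j, C (M i j) * X j) p, fun c ↦ by
    rw [hom_bind₁, show (eval c).comp C = RingHom.id R from eval₂Hom_comp_C _ _]
    change eval _ p = _
    congr 2 with i
    simp only [map_sum, map_mul, eval_C, eval_X]
    rfl⟩

theorem Matrix.mulVec_surjective_of_linearIndependent_row {K m n : Type*} [Field K] [Fintype m]
    [Fintype n] {M : Matrix m n K} (h : LinearIndependent K M.row) :
    Function.Surjective M.mulVec := by
  have : LinearMap.range M.mulVecLin = ⊤ :=
    Submodule.eq_top_of_finrank_eq (by simpa [Matrix.rank] using h.rank_matrix)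
  exact LinearMap.range_eq_top.mp this

section EmbeddingMatrix

variable {E F L ι κ : Type*} [Field E] [Ring F] [Algebra E F] [Field L] [Algebra E L]

noncomputable def embeddingMatrix (b : Module.Basis ι E F) (σ : κ → F →ₐ[E] L) : Matrix κ ι L :=
  Matrix.of fun i j ↦ σ i (b j)

theorem linearIndependent_row_embeddingMatrix (b : Module.Basis ι E F) {σ : κ → F →ₐ[E] L}
    (hσ : Function.Injective σ) : LinearIndependent L (embeddingMatrix b σ).row :=
  ((linearIndependent_algHom_toLinearMap E F L).comp σ hσ).map' (b.constr L).symm.toLinearMap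
    (b.constr L).symm.ker

theorem embeddingMatrix_mulVec_algebraMap_repr [Fintype ι] (b : Module.Basis ι E F)
    (σ : κ → F →ₐ[E] L) (x : F) :
    embeddingMatrix b σ *ᵥ (algebraMap E L ∘ b.repr x) = fun i ↦ σ i x := by
  ext i
  conv_rhs => rw [← b.sum_repr x]
  simp [embeddingMatrix, mulVec, dotProduct, Algebra.smul_def, mul_comm]

end EmbeddingMatrix

theorem MvPolynomial.eq_zero_of_eval_algHom_eq_zero {E F L κ : Type*} [Field E] [Infinite E]
    [Ring F] [Algebra E F] [FiniteDimensional E F] [Field L] [Algebra E L] [Fintype κ]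
    {σ : κ → F →ₐ[E] L} (hσ : Function.Injective σ) {p : MvPolynomial κ L}
    (hp : ∀ x, eval (fun i ↦ σ i x) p = 0) : p = 0 := by
  let b := Module.finBasis E F
  obtain ⟨q, hq⟩ := exists_eval_eq_eval_mulVec (embeddingMatrix b σ) p
  have hq0 : q = 0 := eq_zero_of_eval_algebraMap_eq_zero fun c ↦ by
    obtain ⟨x, rfl⟩ := b.equivFun.surjective c
    rw [hq, b.equivFun_apply, embeddingMatrix_mulVec_algebraMap_repr]
    exact hp x
  have : Infinite L := Infinite.of_injective _ (algebraMap E L).injective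
  refine MvPolynomial.funext fun y ↦ ?_
  obtain ⟨c, rfl⟩ := mulVec_surjective_of_linearIndependent_row
    (linearIndependent_row_embeddingMatrix b hσ) y
  rw [map_zero, ← hq, hq0, map_zero]

theorem stmt4_general (E : Type) [Field E] [Infinite E]
    (Esep : Type) [Field Esep] [Algebra E Esep]
    (F : IntermediateField E Esep) [FiniteDimensional E F]
    (k : ℕ) (σ : Fin k → (F →ₐ[E] Esep)) (hσ : Function.Injective σ)
    (f : MvPolynomial (Fin k) Esep)
    (hf : ∀ x : F, MvPolynomial.eval (fun i => σ i x) f = 0) :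
    f = 0 :=
  eq_zero_of_eval_algHom_eq_zero hσ hf

theorem stmt4 (E : Type) [Field E] [Infinite E]
    (Esep : Type) [Field Esep] [Algebra E Esep] [IsSepClosure E Esep]
    (F : IntermediateField E Esep) [FiniteDimensional E F]
    (k : ℕ) (σ : Fin k → (F →ₐ[E] Esep)) (hσ : Function.Injective σ)
    (f : MvPolynomial (Fin k) Esep)
    (hf : ∀ x : F, MvPolynomial.eval (fun i => σ i x) f = 0) :
    f = 0 :=
  stmt4_general E Esep F k σ hσ f hf
end

section
/- Let p be a prime, let G be a group acting transitively on a finite set X whose cardinality is not divisible by p, and let P be a normal subgroup of G which is a p-group. Then P acts trivially on X, i.e., every element of P fixes every point of X. In particular, if the action of G on X is faithful, then P is the trivial subgroup. -/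
theorem stmt6 (p : ℕ) (hp : p.Prime) (G : Type) [Group G]
    (X : Type) [Finite X] [MulAction G X]
    (htrans : MulAction.IsPretransitive G X)
    (hcard : ¬ p ∣ Nat.card X)
    (P : Subgroup G) (hnormal : P.Normal) (hpgroup : IsPGroup p P) :
    (∀ g ∈ P, ∀ x : X, g • x = x) ∧ (FaithfulSMul G X → P = ⊥) := by
  have key : ∀ g ∈ P, ∀ x : X, g • x = x := by
    haveI : Fact p.Prime := ⟨hp⟩
    obtain ⟨x₀, hx₀⟩ := hpgroup.nonempty_fixed_point_of_prime_not_dvd_card X hcard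
    intro g hg x
    obtain ⟨a, rfl⟩ := htrans.exists_smul_eq x₀ x
    have h1 : a⁻¹ * g * a ∈ P := hnormal.conj_mem' g hg a
    have h2 : (⟨a⁻¹ * g * a, h1⟩ : P) • x₀ = x₀ := hx₀ _
    have h2' : (a⁻¹ * g * a) • x₀ = x₀ := h2
    calc g • a • x₀ = a • (a⁻¹ * g * a) • x₀ := by
          rw [smul_smul, smul_smul]; group
      _ = a • x₀ := by rw [h2']
  refine ⟨key, fun hfaith => ?_⟩
  ext g
  simp only [Subgroup.mem_bot]
  constructor
  · intro hg
    exact eq_of_smul_eq_smul (fun x : X => by rw [key g hg x, one_smul])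
  · rintro rfl; exact P.one_mem
end

section
/- Let F be a separably closed field and σ a field automorphism of F, and let K = F^σ be the fixed field of σ, consisting of the elements of F fixed by σ. Then K is a cyclic field: every finite separable extension of K is cyclic, i.e., for every finite Galois field extension L/K the Galois group Gal(L/K) is a cyclic group. -/
/-- A field is *cyclic* if every finite Galois extension of it has cyclic Galois group. -/
def IsCyclicField (K : Type) [Field K] : Prop :=
  ∀ (L : Type) [Field L] [Algebra K L] [FiniteDimensional K L] [IsGalois K L],
    IsCyclic (L ≃ₐ[K] L)

set_option synthInstance.maxHeartbeats 400000 in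
set_option maxHeartbeats 2000000 in
theorem stmt7 (F : Type) [Field F] (hsc : IsSepClosed F) (σ : F ≃+* F) :
    IsCyclicField (RingHom.eqLocusField (σ : F →+* F) (RingHom.id F)) := by
  set K := RingHom.eqLocusField (σ : F →+* F) (RingHom.id F) with hK
  intro L _ _ _ _
  -- σ as K-algebra automorphism of F
  have hfix : ∀ k : K, σ (k : F) = (k : F) := fun k => k.2
  let σ' : F ≃ₐ[K] F := AlgEquiv.ofRingEquiv (f := σ) (fun k => hfix k)
  -- embed L into F over K
  have : Algebra.IsSeparable K L := IsGalois.to_isSeparable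
  let f : L →ₐ[K] F := IsSepClosed.lift
  let E : IntermediateField K F := f.fieldRange
  let e : L ≃ₐ[K] E := AlgEquiv.ofInjectiveField f
  have hE : IsGalois K E := IsGalois.of_algEquiv e
  have : FiniteDimensional K E := e.toLinearEquiv.finiteDimensional
  suffices h : IsCyclic (E ≃ₐ[K] E) by
    exact isCyclic_of_surjective (AlgEquiv.autCongr e.symm)
      (AlgEquiv.autCongr e.symm).surjective
  let τ : E ≃ₐ[K] E := AlgEquiv.restrictNormalHom E σ'
  have hτ : ∀ x : E, τ x = σ' (x : F) := fun x => AlgEquiv.restrictNormalHom_apply E σ' x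
  have hfixed : IntermediateField.fixedField (Subgroup.zpowers τ) = ⊥ := by
    rw [eq_bot_iff]
    intro x hx
    have hx' : τ x = x := hx ⟨τ, Subgroup.mem_zpowers τ⟩
    have hσx : σ (x : F) = (x : F) := by
      have := hτ x
      rw [hx'] at this
      exact_mod_cast this.symm
    have hxK : (x : F) ∈ K := hσx
    refine (IntermediateField.mem_bot).mpr ⟨⟨(x : F), hxK⟩, ?_⟩
    apply Subtype.ext
    rfl
  have htop : Subgroup.zpowers τ = ⊤ := by
    have := IntermediateField.fixingSubgroup_fixedField (Subgroup.zpowers τ)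
    rw [hfixed] at this
    rw [← this]
    ext g
    simp only [Subgroup.mem_top, iff_true, IntermediateField.mem_fixingSubgroup_iff]
    rintro x hx
    rw [IntermediateField.mem_bot] at hx
    obtain ⟨k, rfl⟩ := hx
    exact g.commutes k
  exact ⟨⟨τ, fun g => by have : g ∈ Subgroup.zpowers τ := htop ▸ Subgroup.mem_top g; exact this⟩⟩
end

section
/- Let p be a prime and let K be a field of characteristic p which is an algebraic extension of its prime field 𝔽_p. Then K is a cyclic field: every finite separable extension of K is cyclic, i.e., for every finite Galois field extension L/K the Galois group Gal(L/K) is a cyclic group. -/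
open IntermediateField

theorem AlgEquiv.eq_of_apply_eq_of_adjoin_simple_eq_top {K L : Type*} [Field K] [Field L]
    [Algebra K L] [FiniteDimensional K L] {α : L} (hα : K⟮α⟯ = ⊤) {σ τ : L ≃ₐ[K] L}
    (h : σ α = τ α) : σ = τ := by
  have hadjoin : Algebra.adjoin K {α} = ⊤ := by
    rw [← adjoin_simple_toSubalgebra_of_isAlgebraic (Algebra.IsAlgebraic.isAlgebraic α), hα,
      top_toSubalgebra]
  exact AlgEquiv.coe_toAlgHom_injective <| AlgHom.ext_of_adjoin_eq_top hadjoin (by simpa using h)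

section Tower

variable {k K L : Type*} [Field k] [Field K] [Field L] [Algebra k K] [Algebra k L] [Algebra K L]
  [IsScalarTower k K L]

theorem isCyclic_algEquiv_of_adjoin_simple_eq_top [Finite k] [FiniteDimensional K L] {α : L}
    (hαk : IsIntegral k α) (hαK : K⟮α⟯ = ⊤) : IsCyclic (L ≃ₐ[K] L) := by
  have : FiniteDimensional k k⟮α⟯ := adjoin.finiteDimensional hαk
  have : Finite k⟮α⟯ := Module.finite_of_finite k
  let restrict : (L ≃ₐ[K] L) →* (k⟮α⟯ ≃ₐ[k] k⟮α⟯) :=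
    (AlgEquiv.restrictNormalHom k⟮α⟯).comp (AlgEquiv.restrictScalarsHom k)
  refine isCyclic_of_injective restrict fun σ τ h ↦ ?_
  refine AlgEquiv.eq_of_apply_eq_of_adjoin_simple_eq_top hαK ?_
  have := congrArg (fun ρ : k⟮α⟯ ≃ₐ[k] k⟮α⟯ ↦ (ρ ⟨α, mem_adjoin_simple_self k α⟩ : L)) h
  simpa [restrict, AlgEquiv.restrictNormalHom_apply] using this

end Tower

theorem isCyclicField_of_isAlgebraic {k K : Type} [Field k] [Finite k] [Field K] [Algebra k K]
    [Algebra.IsAlgebraic k K] : IsCyclicField K := by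
  intro L _ _ _ _
  let : Algebra k L := ((algebraMap K L).comp (algebraMap k K)).toAlgebra
  have : IsScalarTower k K L := IsScalarTower.of_algebraMap_eq fun _ ↦ rfl
  have : Algebra.IsAlgebraic k L := Algebra.IsAlgebraic.trans k K L
  obtain ⟨α, hα⟩ := Field.exists_primitive_element K L
  exact isCyclic_algEquiv_of_adjoin_simple_eq_top (Algebra.IsIntegral.isIntegral (R := k) α) hα

theorem stmt8 (p : ℕ) (hp : p.Prime) (K : Type) [Field K] [CharP K p]
    (halg : ∀ x : K, IsAlgebraic (⊥ : Subfield K) x) :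
    IsCyclicField K := by
  have : Fact p.Prime := ⟨hp⟩
  have : Finite (⊥ : Subfield K) :=
    Nat.finite_of_card_ne_zero (by rw [Subfield.card_bot K p]; exact hp.ne_zero)
  have : Algebra.IsAlgebraic (⊥ : Subfield K) K := ⟨halg⟩
  exact isCyclicField_of_isAlgebraic (k := (⊥ : Subfield K))
end

section
/- Every nontrivial commutative ring R which is finitely generated as a ℤ-algebra has a maximal ideal 𝔪 such that the residue field R/𝔪 is finite. -/
/-!
`ℤ` is a Jacobson ring, so by Zariski's lemma every residue field `R ⧸ 𝔪` of a finitely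
generated `ℤ`-algebra is a finite `ℤ`-module. Being integral over `ℤ`, such a field pulls its
maximal ideal `⊥` back to a maximal, hence nonzero, ideal of `ℤ`: it has positive
characteristic, so it is a finitely generated torsion abelian group, i.e. finite.
-/

theorem isJacobsonRing_of_jacobson_bot_eq_bot {R : Type*} [CommRing R] [IsDomain R]
    [Ring.KrullDimLE 1 R] (h : (⊥ : Ideal R).jacobson = ⊥) : IsJacobsonRing R := by
  refine isJacobsonRing_iff_prime_eq.mpr fun {P} hP => ?_
  rcases eq_or_ne P ⊥ with rfl | hP0
  · exact h
  · have := hP.isMaximal_of_ne_bot hP0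
    exact Ideal.jacobson_eq_self_of_isMaximal

theorem Int.jacobson_bot : (⊥ : Ideal ℤ).jacobson = ⊥ := by
  refine eq_bot_iff.mpr fun x hx => ?_
  rcases Int.isUnit_iff.mp (Ideal.mem_jacobson_bot.mp hx x) with h | h <;>
    simp only [Ideal.mem_bot] <;> nlinarith

instance Int.isJacobsonRing : IsJacobsonRing ℤ :=
  isJacobsonRing_of_jacobson_bot_eq_bot Int.jacobson_bot

theorem Field.finite_of_moduleFinite_int (K : Type*) [Field K] [Module.Finite ℤ K] :
    Finite K := by
  have : Algebra.IsIntegral ℤ K := Algebra.IsIntegral.of_finite ℤ K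
  have hmax : (RingHom.ker (algebraMap ℤ K)).IsMaximal :=
    Ideal.isMaximal_comap_of_isIntegral_of_isMaximal ⊥
  obtain ⟨n, hn, hn0⟩ := Submodule.exists_mem_ne_zero_of_ne_bot
    (Ring.ne_bot_of_isMaximal_of_not_isField hmax Int.not_isField)
  rw [RingHom.mem_ker, eq_intCast] at hn
  refine Module.finite_of_fg_torsion K fun x => ⟨⟨n, mem_nonZeroDivisors_of_ne_zero hn0⟩, ?_⟩
  simp [zsmul_eq_mul, hn]

theorem Ideal.finite_quotient_of_isMaximal_of_finiteType_int {R : Type*} [CommRing R]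
    [Algebra.FiniteType ℤ R] (m : Ideal R) [m.IsMaximal] : Finite (R ⧸ m) := by
  let := Ideal.Quotient.field m
  have : Algebra.FiniteType ℤ (R ⧸ m) :=
    .of_surjective (Ideal.Quotient.mkₐ ℤ m) Ideal.Quotient.mk_surjective
  have := finite_of_finite_type_of_isJacobsonRing ℤ (R ⧸ m)
  exact Field.finite_of_moduleFinite_int (R ⧸ m)

theorem stmt9 (R : Type) [CommRing R] [Nontrivial R] [Algebra.FiniteType ℤ R] :
    ∃ m : Ideal R, m.IsMaximal ∧ Finite (R ⧸ m) := by
  obtain ⟨m, hm⟩ := Ideal.exists_maximal R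
  exact ⟨m, hm, m.finite_quotient_of_isMaximal_of_finiteType_int⟩
end

section
/- Let K₀ be a field finitely generated over its prime field, let E be an elliptic curve over K₀, let K₀^sep be a separable closure of K₀, and let σ ∈ Gal(K₀^sep/K₀); let σ_* be the induced ℂ-linear endomorphism of V = ℂ ⊗_ℤ E(K₀^sep). Let n be a positive integer and suppose that some primitive n-th root of unity λ ∈ ℂ is an eigenvalue of σ_*, i.e., there exists a nonzero v ∈ V with σ_* v = λ · v. Then the closed subgroup topologically generated by σ^n has index exactly n in the closed subgroup topologically generated by σ inside Gal(K₀^sep/K₀) with its Krull topology. -/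
/-
The vector `v` involves only finitely many points, each defined over a finite extension of `K₀`,
so its stabiliser in the Galois group is an open, hence closed, subgroup. As `σ` scales `v` by a
primitive `n`-th root of unity, `σ ^ k` fixes `v` exactly when `n ∣ k`; in particular the closure
of `⟨σ ^ n⟩` fixes `v` and contains no `σ ^ k` with `0 < k < n`. So `σ ^ 0, …, σ ^ (n - 1)` lie in
distinct cosets of that closure, and these cosets cover the closure of `⟨σ⟩`, since their union
is closed and contains every power of `σ`.
-/

open TensorProduct

open scoped Classical in
/-- The `ℂ`-linear endomorphism of `ℂ ⊗[ℤ] E(K₀^sep)` induced by the action of a Galois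
automorphism `σ` on the points of the elliptic curve over the separable closure. -/
noncomputable def galoisStar (K₀ : Type) [Field K₀] (Ksep : Type) [Field Ksep]
    [Algebra K₀ Ksep] (W : WeierstrassCurve K₀) (σ : Ksep ≃ₐ[K₀] Ksep) :
    Module.End ℂ (ℂ ⊗[ℤ] (W.baseChange Ksep).toAffine.Point) :=
  LinearMap.baseChange ℂ
    (WeierstrassCurve.Affine.Point.map (W' := W.toAffine) σ.toAlgHom).toIntLinearMap

open Pointwise Topology

theorem zpow_mem_iUnion_pow_smul_zpowers_pow {G : Type*} [Group G] (σ : G) {n : ℕ} (hn : 0 < n)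
    (m : ℤ) :
    σ ^ m ∈ ⋃ i < n, σ ^ i • (Subgroup.zpowers (σ ^ n) : Set G) := by
  have hn' : (0 : ℤ) < n := by exact_mod_cast hn
  have hr : ((m % n).toNat : ℤ) = m % n := Int.toNat_of_nonneg (Int.emod_nonneg m hn'.ne')
  refine Set.mem_iUnion₂.mpr ⟨(m % n).toNat, by have := Int.emod_lt_of_pos m hn'; omega,
    (σ ^ n) ^ (m / n), ⟨m / n, rfl⟩, ?_⟩
  change σ ^ (m % n).toNat * (σ ^ n) ^ (m / n) = σ ^ m
  rw [← zpow_natCast, hr, ← zpow_natCast, ← zpow_mul, ← zpow_add, Int.emod_add_mul_ediv]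

section TopologicalGroup

variable {G : Type*} [Group G] [TopologicalSpace G] [IsTopologicalGroup G]

theorem topologicalClosure_zpowers_subset_iUnion_pow_smul (σ : G) {n : ℕ} (hn : 0 < n) :
    ((Subgroup.zpowers σ).topologicalClosure : Set G) ⊆
      ⋃ i < n, σ ^ i • ((Subgroup.zpowers (σ ^ n)).topologicalClosure : Set G) := by
  refine closure_minimal ?_ (Set.Finite.isClosed_biUnion (Set.finite_lt_nat n)
    fun i _ ↦ (Subgroup.isClosed_topologicalClosure _).smul _)
  rintro _ ⟨m, rfl⟩
  exact Set.biUnion_mono subset_rfl (fun i _ ↦ Set.smul_set_mono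
    (Subgroup.le_topologicalClosure _)) (zpow_mem_iUnion_pow_smul_zpowers_pow σ hn m)

theorem relIndex_topologicalClosure_zpowers_pow (σ : G) {n : ℕ} (hn : 0 < n)
    (h : ∀ k : ℕ, σ ^ k ∈ (Subgroup.zpowers (σ ^ n)).topologicalClosure → n ∣ k) :
    (Subgroup.zpowers (σ ^ n)).topologicalClosure.relIndex
      (Subgroup.zpowers σ).topologicalClosure = n := by
  set C := (Subgroup.zpowers σ).topologicalClosure
  set D := (Subgroup.zpowers (σ ^ n)).topologicalClosure
  have hσC (i : ℕ) : σ ^ i ∈ C :=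
    pow_mem (Subgroup.le_topologicalClosure _ (Subgroup.mem_zpowers σ)) i
  let f : Fin n → C ⧸ D.subgroupOf C := fun i ↦ QuotientGroup.mk ⟨σ ^ (i : ℕ), hσC i⟩
  have hf : ∀ i j : Fin n, i ≤ j → f i = f j → i = j := by
    intro i j hij hfij
    rw [QuotientGroup.eq, Subgroup.mem_subgroupOf] at hfij
    have hsub : (σ ^ (i : ℕ))⁻¹ * σ ^ (j : ℕ) = σ ^ ((j : ℕ) - i) :=
      inv_mul_eq_iff_eq_mul.mpr (pow_mul_pow_sub σ hij).symm
    have hji : (j : ℕ) - i = 0 :=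
      Nat.eq_zero_of_dvd_of_lt (h _ (by rw [← hsub]; exact hfij)) (by omega)
    exact Fin.ext (by omega)
  have hinj : Function.Injective f := fun i j hij ↦
    (le_total i j).elim (hf i j · hij) (fun hji ↦ (hf j i hji hij.symm).symm)
  have hsurj : Function.Surjective f := by
    rintro ⟨x, hx⟩
    obtain ⟨i, hi, y, hy, rfl⟩ := Set.mem_iUnion₂.mp
      (topologicalClosure_zpowers_subset_iUnion_pow_smul σ hn hx)
    refine ⟨⟨i, hi⟩, QuotientGroup.eq.mpr ?_⟩
    rw [Subgroup.mem_subgroupOf]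
    change (σ ^ i)⁻¹ * (σ ^ i • y) ∈ D
    rwa [smul_eq_mul, inv_mul_cancel_left]
  rw [Subgroup.relIndex, Subgroup.index, ← Nat.card_eq_of_bijective f ⟨hinj, hsurj⟩,
    Nat.card_eq_fintype_card, Fintype.card_fin]

end TopologicalGroup

namespace Representation

variable {k G V : Type*} [Field k] [Group G] [AddCommGroup V] [Module k V]

def stabilizer (ρ : Representation k G V) (v : V) : Subgroup G where
  carrier := {g | ρ g v = v}
  one_mem' := by simp
  mul_mem' {a b} ha hb := by simp_all [Module.End.mul_apply]
  inv_mem' {g} (hg : ρ g v = v) := by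
    change ρ g⁻¹ v = v
    nth_rw 1 [← hg]
    exact ρ.inv_self_apply g v

variable {ρ : Representation k G V} {v : V}

theorem mem_stabilizer_iff {g : G} : g ∈ ρ.stabilizer v ↔ ρ g v = v := Iff.rfl

theorem pow_mem_stabilizer_iff_dvd {σ : G} {lam : k} {n : ℕ} (hlam : IsPrimitiveRoot lam n)
    (hσ : Module.End.HasEigenvector (ρ σ) lam v) (m : ℕ) : σ ^ m ∈ ρ.stabilizer v ↔ n ∣ m := by
  rw [mem_stabilizer_iff, map_pow, hσ.pow_apply, ← hlam.pow_eq_one_iff_dvd]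
  conv_lhs => rhs; rw [← one_smul k v]
  exact (smul_left_injective k hσ.2).eq_iff

theorem topologicalClosure_zpowers_le_stabilizer [TopologicalSpace G] [IsTopologicalGroup G]
    (hv : ∀ᶠ g in 𝓝 1, ρ g v = v) {σ : G} (hσ : σ ∈ ρ.stabilizer v) :
    (Subgroup.zpowers σ).topologicalClosure ≤ ρ.stabilizer v :=
  Subgroup.topologicalClosure_minimal _ (Subgroup.zpowers_le.mpr hσ)
    (Subgroup.isClosed_of_isOpen _ (Subgroup.isOpen_of_mem_nhds _ hv))

end Representation

namespace WeierstrassCurve.Affine.Point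

variable {K L : Type*} [Field K] [Field L] [DecidableEq L] [Algebra K L] [Algebra.IsIntegral K L]
  {W : WeierstrassCurve K}

theorem eventually_map_eq (P : (W.baseChange L).toAffine.Point) :
    ∀ᶠ τ in 𝓝 (1 : L ≃ₐ[K] L), map (W' := W.toAffine) τ.toAlgHom P = P := by
  have fixes (x : L) : ∀ᶠ τ in 𝓝 (1 : L ≃ₐ[K] L), τ x = x :=
    (stabilizer_isOpen_of_isIntegral x).mem_nhds (MulAction.stabilizer _ x).one_mem
  cases P with
  | zero => exact .of_forall fun _ ↦ rfl
  | some x y h => exact ((fixes x).and (fixes y)).mono fun τ ⟨hx, hy⟩ ↦ by simp [map_some, hx, hy]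

end WeierstrassCurve.Affine.Point

section GaloisRepresentation

variable (K₀ : Type) [Field K₀] (Ksep : Type) [Field Ksep] [Algebra K₀ Ksep]
  (W : WeierstrassCurve K₀)

open scoped Classical in
noncomputable def galoisRep :
    Representation ℂ (Ksep ≃ₐ[K₀] Ksep) (ℂ ⊗[ℤ] (W.baseChange Ksep).toAffine.Point) where
  toFun := galoisStar K₀ Ksep W
  map_one' := by
    rw [galoisStar, ← LinearMap.baseChange_one]
    congr 1
    ext P
    cases P <;> rfl
  map_mul' σ τ := by
    rw [galoisStar, galoisStar, galoisStar, ← LinearMap.baseChange_mul]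
    congr 1
    ext P
    cases P <;> rfl

theorem galoisRep_apply (σ : Ksep ≃ₐ[K₀] Ksep) : galoisRep K₀ Ksep W σ = galoisStar K₀ Ksep W σ :=
  rfl

open scoped Classical in
theorem eventually_galoisRep_apply_eq [Algebra.IsIntegral K₀ Ksep]
    (v : ℂ ⊗[ℤ] (W.baseChange Ksep).toAffine.Point) :
    ∀ᶠ τ in 𝓝 1, galoisRep K₀ Ksep W τ v = v := by
  obtain ⟨s, rfl⟩ := TensorProduct.exists_finset v
  filter_upwards [(Filter.eventually_all_finset s).mpr fun p _ ↦
    WeierstrassCurve.Affine.Point.eventually_map_eq p.2] with τ hτ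
  rw [map_sum]
  exact Finset.sum_congr rfl fun p hp ↦ by simp [galoisRep_apply, galoisStar, hτ p hp]

end GaloisRepresentation

open scoped Classical in
theorem stmt11_general (K₀ : Type) [Field K₀]
    (Ksep : Type) [Field Ksep] [Algebra K₀ Ksep] [IsSepClosure K₀ Ksep]
    (W : WeierstrassCurve K₀)
    (σ : Ksep ≃ₐ[K₀] Ksep) (n : ℕ) (hn : 0 < n)
    (lam : ℂ) (hlam : IsPrimitiveRoot lam n)
    (hev : ∃ v : ℂ ⊗[ℤ] (W.baseChange Ksep).toAffine.Point,
      v ≠ 0 ∧ galoisStar K₀ Ksep W σ v = lam • v) :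
    (Subgroup.zpowers (σ ^ n)).topologicalClosure.relIndex
      (Subgroup.zpowers σ).topologicalClosure = n := by
  obtain ⟨v, hv0, hσv⟩ := hev
  have : Algebra.IsSeparable K₀ Ksep := IsSepClosure.separable
  have hσ : Module.End.HasEigenvector (galoisRep K₀ Ksep W σ) lam v :=
    ⟨Module.End.mem_eigenspace_iff.mpr hσv, hv0⟩
  have hstab := (galoisRep K₀ Ksep W).pow_mem_stabilizer_iff_dvd hlam hσ
  refine relIndex_topologicalClosure_zpowers_pow σ hn fun m hm ↦ (hstab m).mp ?_
  exact Representation.topologicalClosure_zpowers_le_stabilizer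
    (eventually_galoisRep_apply_eq K₀ Ksep W v) ((hstab n).mpr dvd_rfl) hm

open scoped Classical in
theorem stmt11 (K₀ : Type) [Field K₀]
    (hfg : ∃ s : Finset K₀, Subfield.closure (s : Set K₀) = ⊤)
    (Ksep : Type) [Field Ksep] [Algebra K₀ Ksep] [IsSepClosure K₀ Ksep]
    (W : WeierstrassCurve K₀) (hΔ : W.Δ ≠ 0)
    (σ : Ksep ≃ₐ[K₀] Ksep) (n : ℕ) (hn : 0 < n)
    (lam : ℂ) (hlam : IsPrimitiveRoot lam n)
    (hev : ∃ v : ℂ ⊗[ℤ] (W.baseChange Ksep).toAffine.Point,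
      v ≠ 0 ∧ galoisStar K₀ Ksep W σ v = lam • v) :
    (Subgroup.zpowers (σ ^ n)).topologicalClosure.relIndex
      (Subgroup.zpowers σ).topologicalClosure = n :=
  stmt11_general K₀ Ksep W σ n hn lam hlam hev
end
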